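/- arXiv:1701.02334 — 5 statements merged into one kernel-verified Lean document; each statement's English description precedes it below -/
import Mathlib

section
/- For every real t with 0 < 1 - γ = t ≤ 1 where 0 ≤ γ ≤ 4.444·δ and 0 ≤ δ ≤ 0.0045, one has 2 ≤ t + 1/t ≤ 2 + 20.153·δ². -/
/-! Since `t + 1/t - 2 = (1 - t)² / t = γ² / t`, the lower bound is AM–GM and the upper bound
follows from `γ ≤ 4.444 δ` together with `t ≥ 1 - 4.444 · 0.0045`, because
`4.444² / (1 - 4.444 · 0.0045) ≈ 20.1521`. -/

lemma add_one_div_sub_two {t : ℝ} (ht : t ≠ 0) : t + 1 / t - 2 = (1 - t) ^ 2 / t := by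
  field_simp
  ring

lemma two_le_add_one_div {t : ℝ} (ht : 0 < t) : 2 ≤ t + 1 / t := by
  have : 0 ≤ (1 - t) ^ 2 / t := by positivity
  linarith [add_one_div_sub_two ht.ne']

lemma add_one_div_le_two_add {t m : ℝ} (hm : 0 < m) (hmt : m ≤ t) :
    t + 1 / t ≤ 2 + (1 - t) ^ 2 / m := by
  have : (1 - t) ^ 2 / t ≤ (1 - t) ^ 2 / m := by gcongr
  linarith [add_one_div_sub_two (hm.trans_le hmt).ne']

theorem t_add_inv_bounds_general (t γ δ : ℝ) (hδ : δ ≤ 0.0045)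
    (hγ0 : 0 ≤ γ) (hγ : γ ≤ 4.444 * δ) (ht : t = 1 - γ) (ht0 : 0 < t) :
    2 ≤ t + 1 / t ∧ t + 1 / t ≤ 2 + 20.153 * δ ^ 2 := by
  refine ⟨two_le_add_one_div ht0, ?_⟩
  have hm : (1 - 4.444 * 0.0045 : ℝ) ≤ t := by linarith
  have hγ_sq : (1 - t) ^ 2 ≤ 4.444 ^ 2 * δ ^ 2 := by
    rw [ht, sub_sub_cancel, ← mul_pow]
    exact pow_le_pow_left₀ hγ0 hγ 2
  calc t + 1 / t ≤ 2 + (1 - t) ^ 2 / (1 - 4.444 * 0.0045) :=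
        add_one_div_le_two_add (by norm_num) hm
    _ ≤ 2 + 4.444 ^ 2 * δ ^ 2 / (1 - 4.444 * 0.0045) := by gcongr
    _ ≤ 2 + 20.153 * δ ^ 2 := by
      rw [mul_div_right_comm]
      gcongr
      norm_num

theorem t_add_inv_bounds (t γ δ : ℝ) (hδ0 : 0 ≤ δ) (hδ : δ ≤ 0.0045)
    (hγ0 : 0 ≤ γ) (hγ : γ ≤ 4.444 * δ) (ht : t = 1 - γ) (ht0 : 0 < t) (ht1 : t ≤ 1) :
    2 ≤ t + 1 / t ∧ t + 1 / t ≤ 2 + 20.153 * δ ^ 2 :=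
  t_add_inv_bounds_general t γ δ hδ hγ0 hγ ht ht0
end

section
/- Let A be a symmetric 4×4 real matrix with a₁₂ = 0 and a₃₄ = 0, and let φ, ψ ∈ [-π/4, π/4]. Define a₁₃' = a₁₄ cos φ cos ψ - a₂₃ sin φ sin ψ and a₂₄' = a₁₄ sin φ sin ψ - a₂₃ cos φ cos ψ. Then (a₁₃')² + (a₂₄')² ≥ (1/2)(|a₁₄| - |a₂₃|)². -/
/-! With `x = cos φ cos ψ` and `y = sin φ sin ψ` the left side is `(a² + b²)(x² + y²) - 4abxy`,
which is at least `(x² + y²)(|a| - |b|)²` because `2|xy| ≤ x² + y²`. Finally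
`x² + y² = (1 + cos 2φ cos 2ψ) / 2 ≥ 1 / 2`, as `cos 2φ, cos 2ψ ≥ 0` for `|φ|, |ψ| ≤ π/4`. -/

open Real

theorem sq_mul_sq_abs_sub_abs_le (a b x y : ℝ) :
    (x ^ 2 + y ^ 2) * (|a| - |b|) ^ 2 ≤ (a * x - b * y) ^ 2 + (a * y - b * x) ^ 2 := by
  have hab : |a| * |b| = |a * b| := (abs_mul a b).symm
  have cross : 4 * (a * b) * (x * y) ≤ 2 * |a * b| * (x ^ 2 + y ^ 2) := by
    nlinarith [mul_nonneg (sub_nonneg.2 (le_abs_self (a * b))) (sq_nonneg (x + y)),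
      mul_nonneg (sub_nonneg.2 (neg_le_abs (a * b))) (sq_nonneg (x - y))]
  nlinarith [sq_abs a, sq_abs b]

theorem cos_sq_mul_cos_sq_add_sin_sq_mul_sin_sq (φ ψ : ℝ) :
    (cos φ * cos ψ) ^ 2 + (sin φ * sin ψ) ^ 2 = 1 / 2 + cos (2 * φ) * cos (2 * ψ) / 2 := by
  rw [mul_pow, mul_pow, sin_sq, sin_sq, cos_two_mul, cos_two_mul]
  ring

theorem cos_two_mul_nonneg_of_mem_Icc {φ : ℝ} (hφ : φ ∈ Set.Icc (-(π / 4)) (π / 4)) :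
    0 ≤ cos (2 * φ) :=
  cos_nonneg_of_mem_Icc ⟨by linarith [hφ.1], by linarith [hφ.2]⟩

theorem new_pivot_lower_bound_general (A : Matrix (Fin 4) (Fin 4) ℝ)
    (φ ψ : ℝ) (hφ : φ ∈ Set.Icc (-(π/4)) (π/4)) (hψ : ψ ∈ Set.Icc (-(π/4)) (π/4)) :
    (A 0 3 * Real.cos φ * Real.cos ψ - A 1 2 * Real.sin φ * Real.sin ψ) ^ 2 +
      (A 0 3 * Real.sin φ * Real.sin ψ - A 1 2 * Real.cos φ * Real.cos ψ) ^ 2 ≥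
    (1 / 2) * (|A 0 3| - |A 1 2|) ^ 2 := by
  have hweight : 1 / 2 ≤ (cos φ * cos ψ) ^ 2 + (sin φ * sin ψ) ^ 2 := by
    rw [cos_sq_mul_cos_sq_add_sin_sq_mul_sin_sq]
    have := mul_nonneg (cos_two_mul_nonneg_of_mem_Icc hφ) (cos_two_mul_nonneg_of_mem_Icc hψ)
    linarith
  calc (1 / 2) * (|A 0 3| - |A 1 2|) ^ 2
      ≤ ((cos φ * cos ψ) ^ 2 + (sin φ * sin ψ) ^ 2) * (|A 0 3| - |A 1 2|) ^ 2 := by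
        gcongr
    _ ≤ _ := sq_mul_sq_abs_sub_abs_le _ _ _ _
    _ = _ := by ring

theorem new_pivot_lower_bound (A : Matrix (Fin 4) (Fin 4) ℝ) (hA : A.IsSymm)
    (h12 : A 0 1 = 0) (h34 : A 2 3 = 0)
    (φ ψ : ℝ) (hφ : φ ∈ Set.Icc (-(π/4)) (π/4)) (hψ : ψ ∈ Set.Icc (-(π/4)) (π/4)) :
    (A 0 3 * Real.cos φ * Real.cos ψ - A 1 2 * Real.sin φ * Real.sin ψ) ^ 2 +
      (A 0 3 * Real.sin φ * Real.sin ψ - A 1 2 * Real.cos φ * Real.cos ψ) ^ 2 ≥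
    (1 / 2) * (|A 0 3| - |A 1 2|) ^ 2 :=
  new_pivot_lower_bound_general A φ ψ hφ hψ
end

section
/- Let A be a symmetric 4×4 real matrix with a₁₂ = 0, a₃₄ = 0 and a₁₃ = 0. Apply four Jacobi steps under the pivot order (1,3),(2,4),(1,4),(2,3) (with rotation angles in [-π/4, π/4] chosen by the standard Jacobi formula) to obtain A⁽⁴⁾. Then S²(A⁽⁴⁾) ≤ (1/2)·S²(A), where S(X)² = Σ_{i<j} x_{ij}². -/
/-!
A Jacobi step at pivot `(i,j)` rotates each pair `(a_ri, a_rj)`, `r ∉ {i,j}`, leaves the other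
off-diagonal entries alone and annihilates `a_ij`, so it lowers `S²` by exactly `a_ij²`.
With `a₁₃ = 0` the first step is the identity, and `S²(A) = a₁₄² + a₂₃² + a₂₄²`. The second step
removes `a₂₄` and turns `a₁₄`, `a₂₃` into `cos φ₂ · a₁₄`, `cos φ₂ · a₂₃`; the third step does not
touch `a₂₃`, so the last two steps remove `cos² φ₂ (a₁₄² + a₂₃²)` and leave
`S²(A⁽⁴⁾) = sin² φ₂ (a₁₄² + a₂₃²)`. Finally `|φ₂| ≤ π/4` gives `sin² φ₂ ≤ 1/2`.
(Indices here are the paper's; in Lean `a₁₄` is `A 0 3`.)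
-/

open Real Matrix

/-- The plane rotation matrix `R(i,j,φ)` of order 4. -/
noncomputable def planeRot (i j : Fin 4) (φ : ℝ) : Matrix (Fin 4) (Fin 4) ℝ :=
  Matrix.of fun r s =>
    if r = i ∧ s = i then Real.cos φ
    else if r = i ∧ s = j then -Real.sin φ
    else if r = j ∧ s = i then Real.sin φ
    else if r = j ∧ s = j then Real.cos φ
    else if r = s then 1 else 0

/-- `φ ∈ [-π/4, π/4]` is the Jacobi rotation angle for pivot element `a` and
diagonal difference `d`, i.e. `tan 2φ = 2a/d` (equivalently
`a cos 2φ = (d/2) sin 2φ`), with the convention `φ = 0` if `a = 0`. -/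
def IsJacobiAngle (a d φ : ℝ) : Prop :=
  φ ∈ Set.Icc (-(π/4)) (π/4) ∧ (a = 0 → φ = 0) ∧
    a * Real.cos (2 * φ) = (d / 2) * Real.sin (2 * φ)

/-- One Jacobi step at pivot `(i,j)` with angle `φ`. -/
noncomputable def jacobiStep (A : Matrix (Fin 4) (Fin 4) ℝ) (i j : Fin 4) (φ : ℝ) :
    Matrix (Fin 4) (Fin 4) ℝ :=
  (planeRot i j φ)ᵀ * A * planeRot i j φ

/-- The square of the off-norm: `S(X)² = ∑_{i<j} x_{ij}²`. -/
def offSq (X : Matrix (Fin 4) (Fin 4) ℝ) : ℝ :=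
  ∑ i : Fin 4, ∑ j : Fin 4, if i < j then (X i j) ^ 2 else 0


variable {i j : Fin 4} {φ : ℝ}

lemma planeRot_apply_of_ne {s : Fin 4} (hsi : s ≠ i) (hsj : s ≠ j) (l : Fin 4) :
    planeRot i j φ l s = if l = s then 1 else 0 := by
  simp [planeRot, hsi, hsj]

lemma planeRot_zero : planeRot i j 0 = 1 := by
  ext r s
  simp only [planeRot, of_apply, cos_zero, sin_zero, neg_zero, one_apply]
  split_ifs <;> grind

lemma mul_planeRot_apply_of_ne (B : Matrix (Fin 4) (Fin 4) ℝ) (r : Fin 4) {s : Fin 4}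
    (hsi : s ≠ i) (hsj : s ≠ j) : (B * planeRot i j φ) r s = B r s := by
  simp [mul_apply, planeRot_apply_of_ne hsi hsj]

lemma mul_planeRot_apply_fst (hij : i ≠ j) (B : Matrix (Fin 4) (Fin 4) ℝ) (r : Fin 4) :
    (B * planeRot i j φ) r i = cos φ * B r i + sin φ * B r j := by
  rw [mul_apply, Fintype.sum_eq_add i j hij]
  · simp only [planeRot, of_apply, and_self, ↓reduceIte, hij.symm, and_true, false_and]
    ring
  · rintro l ⟨hli, hlj⟩
    simp [planeRot, hli, hlj]

lemma mul_planeRot_apply_snd (hij : i ≠ j) (B : Matrix (Fin 4) (Fin 4) ℝ) (r : Fin 4) :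
    (B * planeRot i j φ) r j = -sin φ * B r i + cos φ * B r j := by
  rw [mul_apply, Fintype.sum_eq_add i j hij]
  · simp only [planeRot, of_apply, hij.symm, and_false, ↓reduceIte, and_self, mul_neg, and_true,
      neg_mul]
    ring
  · rintro l ⟨hli, hlj⟩
    simp [planeRot, hli, hlj]

lemma transpose_planeRot_mul (B : Matrix (Fin 4) (Fin 4) ℝ) :
    (planeRot i j φ)ᵀ * B = (Bᵀ * planeRot i j φ)ᵀ := by
  rw [transpose_mul, transpose_transpose]

lemma jacobiStep_zero (A : Matrix (Fin 4) (Fin 4) ℝ) : jacobiStep A i j 0 = A := by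
  simp [jacobiStep, planeRot_zero]

lemma isSymm_jacobiStep {A : Matrix (Fin 4) (Fin 4) ℝ} (hA : A.IsSymm) :
    (jacobiStep A i j φ).IsSymm := by
  rw [Matrix.IsSymm, jacobiStep, transpose_mul, transpose_mul, transpose_transpose, hA.eq,
    Matrix.mul_assoc]

section jacobiStep_apply

variable (A : Matrix (Fin 4) (Fin 4) ℝ) {r s : Fin 4}

lemma jacobiStep_apply_of_ne (hri : r ≠ i) (hrj : r ≠ j) (hsi : s ≠ i) (hsj : s ≠ j) :
    jacobiStep A i j φ r s = A r s := by
  rw [jacobiStep, mul_planeRot_apply_of_ne _ _ hsi hsj, transpose_planeRot_mul, transpose_apply,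
    mul_planeRot_apply_of_ne _ _ hri hrj, transpose_apply]

lemma jacobiStep_apply_col_fst (hij : i ≠ j) (hri : r ≠ i) (hrj : r ≠ j) :
    jacobiStep A i j φ r i = cos φ * A r i + sin φ * A r j := by
  rw [jacobiStep, mul_planeRot_apply_fst hij, transpose_planeRot_mul, transpose_apply,
    transpose_apply, mul_planeRot_apply_of_ne _ _ hri hrj, mul_planeRot_apply_of_ne _ _ hri hrj,
    transpose_apply, transpose_apply]

lemma jacobiStep_apply_col_snd (hij : i ≠ j) (hri : r ≠ i) (hrj : r ≠ j) :
    jacobiStep A i j φ r j = -sin φ * A r i + cos φ * A r j := by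
  rw [jacobiStep, mul_planeRot_apply_snd hij, transpose_planeRot_mul, transpose_apply,
    transpose_apply, mul_planeRot_apply_of_ne _ _ hri hrj, mul_planeRot_apply_of_ne _ _ hri hrj,
    transpose_apply, transpose_apply]

lemma jacobiStep_apply_row_fst (hij : i ≠ j) (hsi : s ≠ i) (hsj : s ≠ j) :
    jacobiStep A i j φ i s = cos φ * A i s + sin φ * A j s := by
  rw [jacobiStep, mul_planeRot_apply_of_ne _ _ hsi hsj, transpose_planeRot_mul, transpose_apply,
    mul_planeRot_apply_fst hij, transpose_apply, transpose_apply]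

lemma jacobiStep_apply_row_snd (hij : i ≠ j) (hsi : s ≠ i) (hsj : s ≠ j) :
    jacobiStep A i j φ j s = -sin φ * A i s + cos φ * A j s := by
  rw [jacobiStep, mul_planeRot_apply_of_ne _ _ hsi hsj, transpose_planeRot_mul, transpose_apply,
    mul_planeRot_apply_snd hij, transpose_apply, transpose_apply]

lemma jacobiStep_apply_pivot {A : Matrix (Fin 4) (Fin 4) ℝ} (hA : A.IsSymm) (hij : i ≠ j)
    (hφ : IsJacobiAngle (A i j) (A i i - A j j) φ) : jacobiStep A i j φ i j = 0 := by
  have hpivot := hφ.2.2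
  -- the new pivot entry is `a cos 2φ - (d / 2) sin 2φ`
  rw [cos_two_mul, sin_two_mul] at hpivot
  rw [jacobiStep, mul_planeRot_apply_snd hij, transpose_planeRot_mul, transpose_apply,
    transpose_apply, mul_planeRot_apply_fst hij, mul_planeRot_apply_fst hij]
  simp only [transpose_apply, hA.apply i j]
  linear_combination hpivot - A i j * sin_sq_add_cos_sq φ

end jacobiStep_apply

lemma offSq_eq (X : Matrix (Fin 4) (Fin 4) ℝ) :
    offSq X = X 0 1 ^ 2 + X 0 2 ^ 2 + X 0 3 ^ 2 + X 1 2 ^ 2 + X 1 3 ^ 2 + X 2 3 ^ 2 := by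
  simp [offSq, Fin.sum_univ_four, add_assoc]

lemma offSq_jacobiStep {A : Matrix (Fin 4) (Fin 4) ℝ} (hA : A.IsSymm) (hij : i < j)
    (hφ : IsJacobiAngle (A i j) (A i i - A j j) φ) :
    offSq (jacobiStep A i j φ) = offSq A - A i j ^ 2 := by
  have hpivot := jacobiStep_apply_pivot hA hij.ne hφ
  have hsymm : ∀ r s : Fin 4, s < r → A r s = A s r := fun r s _ => hA.apply s r
  fin_cases i <;> fin_cases j <;> simp at hij hpivot ⊢ <;>
    simp (disch := decide) only [offSq_eq, jacobiStep_apply_of_ne, jacobiStep_apply_col_fst,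
      jacobiStep_apply_col_snd, jacobiStep_apply_row_fst, jacobiStep_apply_row_snd, hpivot, hsymm] <;>
    simp only [add_sq, mul_pow, neg_mul, neg_sq, cos_sq'] <;> ring

lemma IsJacobiAngle.one_half_le_cos_sq {a d : ℝ} (hφ : IsJacobiAngle a d φ) :
    1 / 2 ≤ cos φ ^ 2 := by
  obtain ⟨⟨hlo, hhi⟩, -, -⟩ := hφ
  have h2φ : 0 ≤ cos (2 * φ) := cos_nonneg_of_mem_Icc ⟨by linarith, by linarith⟩
  rw [cos_two_mul] at h2φ
  linarith

theorem offnorm_halved_of_a13_zero (A : Matrix (Fin 4) (Fin 4) ℝ) (hA : A.IsSymm)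
    (h12 : A 0 1 = 0) (h34 : A 2 3 = 0) (h13 : A 0 2 = 0)
    (φ₁ φ₂ φ₃ φ₄ : ℝ)
    (A₁ A₂ A₃ A₄ : Matrix (Fin 4) (Fin 4) ℝ)
    (hφ₁ : IsJacobiAngle (A 0 2) (A 0 0 - A 2 2) φ₁)
    (hA₁ : A₁ = jacobiStep A 0 2 φ₁)
    (hφ₂ : IsJacobiAngle (A₁ 1 3) (A₁ 1 1 - A₁ 3 3) φ₂)
    (hA₂ : A₂ = jacobiStep A₁ 1 3 φ₂)
    (hφ₃ : IsJacobiAngle (A₂ 0 3) (A₂ 0 0 - A₂ 3 3) φ₃)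
    (hA₃ : A₃ = jacobiStep A₂ 0 3 φ₃)
    (hφ₄ : IsJacobiAngle (A₃ 1 2) (A₃ 1 1 - A₃ 2 2) φ₄)
    (hA₄ : A₄ = jacobiStep A₃ 1 2 φ₄) :
    offSq A₄ ≤ (1 / 2) * offSq A := by
  have hA₁A : A₁ = A := by rw [hA₁, hφ₁.2.1 h13, jacobiStep_zero]
  rw [hA₁A] at hφ₂ hA₂
  have hA₂s : A₂.IsSymm := hA₂ ▸ isSymm_jacobiStep hA
  have hA₃s : A₃.IsSymm := hA₃ ▸ isSymm_jacobiStep hA₂s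
  have hoff : offSq A₄ = offSq A - A 1 3 ^ 2 - A₂ 0 3 ^ 2 - A₃ 1 2 ^ 2 := by
    rw [hA₄, offSq_jacobiStep hA₃s (by decide) hφ₄, hA₃, offSq_jacobiStep hA₂s (by decide) hφ₃,
      hA₂, offSq_jacobiStep hA (by decide) hφ₂]
  have hA₂03 : A₂ 0 3 = cos φ₂ * A 0 3 := by
    rw [hA₂, jacobiStep_apply_col_snd _ (by decide) (by decide) (by decide), h12]
    ring
  have hA₃12 : A₃ 1 2 = cos φ₂ * A 1 2 := by
    rw [hA₃, jacobiStep_apply_of_ne _ (by decide) (by decide) (by decide) (by decide), hA₂,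
      jacobiStep_apply_row_fst _ (by decide) (by decide) (by decide), hA.apply 2 3, h34]
    ring
  have hcos := hφ₂.one_half_le_cos_sq
  rw [hoff, hA₂03, hA₃12, offSq_eq A, h12, h13, h34]
  linear_combination (A 0 3 ^ 2 + A 1 2 ^ 2) * hcos + sq_nonneg (A 1 3) / 2
end

section
/- Let 0 < ε ≤ 10⁻⁵ and suppose φ, ψ ∈ [-π/4, π/4] satisfy cos(φ - ψ) ≤ 1.4143·δ for some 0 ≤ δ ≤ 0.0045. Then either φ = π/4 - α and ψ = -π/4 + β with α, β ≥ 0 and α + β ≤ 2.222·δ, or φ = -π/4 + α' and ψ = π/4 - β' with α', β' ≥ 0 and α' + β' ≤ 2.222·δ. Moreover |sin(φ + ψ)| ≤ |φ + ψ| ≤ 2.222·δ and |tan φ + tan ψ| ≤ 4.444·δ. -/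
/-!
Jordan's inequality `sin t ≥ (2/π) t` on `[0, π/2]`, applied at `t = π/2 - |φ - ψ|`, gives
`π/2 - |φ - ψ| ≤ (π/2) cos (φ - ψ)`. On the square `[-π/4, π/4]²` the gap `π/2 - |φ - ψ|` is exactly
the ℓ¹-distance from `(φ, ψ)` to the nearer of the corners `±(π/4, -π/4)`, and it dominates `|φ + ψ|`.
Finally `tan φ + tan ψ = sin (φ + ψ) / (cos φ cos ψ)` with `cos φ cos ψ ≥ 1/2` on the square.
-/

open Real

namespace Real

theorem pi_div_two_sub_abs_le_mul_cos {x : ℝ} (hx : |x| ≤ π / 2) :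
    π / 2 - |x| ≤ π / 2 * cos x := by
  have hjordan : 2 / π * (π / 2 - |x|) ≤ sin (π / 2 - |x|) :=
    mul_le_sin (by linarith) (by linarith [abs_nonneg x])
  rw [sin_pi_div_two_sub, cos_abs] at hjordan
  have hπ := pi_pos
  calc π / 2 - |x| = π / 2 * (2 / π * (π / 2 - |x|)) := by field_simp
    _ ≤ π / 2 * cos x := by gcongr

theorem sqrt_two_div_two_le_cos {x : ℝ} (hx : |x| ≤ π / 4) : √2 / 2 ≤ cos x := by
  rw [← cos_pi_div_four, ← cos_abs x]
  exact cos_le_cos_of_nonneg_of_le_pi (abs_nonneg x) (by linarith [pi_pos]) hx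

theorem one_half_le_cos_mul_cos {φ ψ : ℝ} (hφ : |φ| ≤ π / 4) (hψ : |ψ| ≤ π / 4) :
    1 / 2 ≤ cos φ * cos ψ := by
  have hφ' := sqrt_two_div_two_le_cos hφ
  have hψ' := sqrt_two_div_two_le_cos hψ
  have hsqrt : √2 / 2 * (√2 / 2) = 1 / 2 := by
    rw [div_mul_div_comm, mul_self_sqrt zero_le_two]; norm_num
  rw [← hsqrt]
  exact mul_le_mul hφ' hψ' (by positivity) (hφ'.trans' (by positivity))

theorem tan_add_tan {φ ψ : ℝ} (hφ : cos φ ≠ 0) (hψ : cos ψ ≠ 0) :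
    tan φ + tan ψ = sin (φ + ψ) / (cos φ * cos ψ) := by
  rw [tan_eq_sin_div_cos, tan_eq_sin_div_cos, sin_add, div_add_div _ _ hφ hψ]

theorem abs_tan_add_tan_le {φ ψ : ℝ} (hφ : |φ| ≤ π / 4) (hψ : |ψ| ≤ π / 4) :
    |tan φ + tan ψ| ≤ 2 * |φ + ψ| := by
  have hprod := one_half_le_cos_mul_cos hφ hψ
  have hcos : 0 < cos φ * cos ψ := by linarith
  rw [tan_add_tan (left_ne_zero_of_mul hcos.ne') (right_ne_zero_of_mul hcos.ne'), abs_div,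
    abs_of_pos hcos, div_le_iff₀ hcos]
  calc |sin (φ + ψ)| ≤ |φ + ψ| := abs_sin_le_abs
    _ = 2 * |φ + ψ| * (1 / 2) := by ring
    _ ≤ 2 * |φ + ψ| * (cos φ * cos ψ) := by gcongr

end Real

section Corners

variable {φ ψ : ℝ}

theorem abs_sub_le_pi_div_two_of_mem_Icc (hφ : φ ∈ Set.Icc (-(π / 4)) (π / 4))
    (hψ : ψ ∈ Set.Icc (-(π / 4)) (π / 4)) : |φ - ψ| ≤ π / 2 :=
  abs_le.mpr ⟨by linarith [hφ.1, hψ.2], by linarith [hφ.2, hψ.1]⟩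

theorem abs_add_le_pi_div_two_sub_abs_sub_of_mem_Icc (hφ : φ ∈ Set.Icc (-(π / 4)) (π / 4))
    (hψ : ψ ∈ Set.Icc (-(π / 4)) (π / 4)) : |φ + ψ| ≤ π / 2 - |φ - ψ| := by
  obtain ⟨hφ1, hφ2⟩ := hφ
  obtain ⟨hψ1, hψ2⟩ := hψ
  rcases abs_cases (φ - ψ) with ⟨h, _⟩ | ⟨h, _⟩ <;> rw [h] <;>
    exact abs_le.mpr ⟨by linarith, by linarith⟩

theorem exists_corner_of_pi_div_two_sub_abs_sub_le (hφ : φ ∈ Set.Icc (-(π / 4)) (π / 4))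
    (hψ : ψ ∈ Set.Icc (-(π / 4)) (π / 4)) {c : ℝ} (hc : π / 2 - |φ - ψ| ≤ c) :
    (∃ α β : ℝ, 0 ≤ α ∧ 0 ≤ β ∧ α + β ≤ c ∧ φ = π / 4 - α ∧ ψ = -(π / 4) + β) ∨
      (∃ α' β' : ℝ, 0 ≤ α' ∧ 0 ≤ β' ∧ α' + β' ≤ c ∧ φ = -(π / 4) + α' ∧ ψ = π / 4 - β') := by
  obtain ⟨hφ1, hφ2⟩ := hφ
  obtain ⟨hψ1, hψ2⟩ := hψ
  rcases le_total ψ φ with h | h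
  · rw [abs_of_nonneg (sub_nonneg.mpr h)] at hc
    exact .inl ⟨π / 4 - φ, ψ + π / 4, by linarith, by linarith, by linarith, by ring, by ring⟩
  · rw [abs_of_nonpos (sub_nonpos.mpr h)] at hc
    exact .inr ⟨φ + π / 4, π / 4 - ψ, by linarith, by linarith, by linarith, by ring, by ring⟩

end Corners

theorem angles_near_corners_general (δ φ ψ : ℝ)
    (hδ0 : 0 ≤ δ)
    (hφ : φ ∈ Set.Icc (-(π/4)) (π/4)) (hψ : ψ ∈ Set.Icc (-(π/4)) (π/4))
    (hcos : Real.cos (φ - ψ) ≤ 1.4143 * δ) :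
    ((∃ α β : ℝ, 0 ≤ α ∧ 0 ≤ β ∧ α + β ≤ 2.222 * δ ∧
        φ = π/4 - α ∧ ψ = -(π/4) + β) ∨
     (∃ α' β' : ℝ, 0 ≤ α' ∧ 0 ≤ β' ∧ α' + β' ≤ 2.222 * δ ∧
        φ = -(π/4) + α' ∧ ψ = π/4 - β')) ∧
    |Real.sin (φ + ψ)| ≤ |φ + ψ| ∧ |φ + ψ| ≤ 2.222 * δ ∧
    |Real.tan φ + Real.tan ψ| ≤ 4.444 * δ := by
  have hgap : π / 2 - |φ - ψ| ≤ 2.222 * δ :=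
    calc π / 2 - |φ - ψ| ≤ π / 2 * cos (φ - ψ) :=
          pi_div_two_sub_abs_le_mul_cos (abs_sub_le_pi_div_two_of_mem_Icc hφ hψ)
      _ ≤ π / 2 * (1.4143 * δ) := by gcongr
      _ ≤ 2.222 * δ := by nlinarith [pi_lt_d6]
  have hsum : |φ + ψ| ≤ 2.222 * δ :=
    (abs_add_le_pi_div_two_sub_abs_sub_of_mem_Icc hφ hψ).trans hgap
  refine ⟨exists_corner_of_pi_div_two_sub_abs_sub_le hφ hψ hgap, abs_sin_le_abs, hsum, ?_⟩
  calc |tan φ + tan ψ| ≤ 2 * |φ + ψ| := abs_tan_add_tan_le (abs_le.mpr hφ) (abs_le.mpr hψ)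
    _ ≤ 4.444 * δ := by linarith

theorem angles_near_corners (ε δ φ ψ : ℝ)
    (hε0 : 0 < ε) (hε : ε ≤ 1e-5)
    (hδ0 : 0 ≤ δ) (hδ : δ ≤ 0.0045)
    (hφ : φ ∈ Set.Icc (-(π/4)) (π/4)) (hψ : ψ ∈ Set.Icc (-(π/4)) (π/4))
    (hcos : Real.cos (φ - ψ) ≤ 1.4143 * δ) :
    ((∃ α β : ℝ, 0 ≤ α ∧ 0 ≤ β ∧ α + β ≤ 2.222 * δ ∧
        φ = π/4 - α ∧ ψ = -(π/4) + β) ∨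
     (∃ α' β' : ℝ, 0 ≤ α' ∧ 0 ≤ β' ∧ α' + β' ≤ 2.222 * δ ∧
        φ = -(π/4) + α' ∧ ψ = π/4 - β')) ∧
    |Real.sin (φ + ψ)| ≤ |φ + ψ| ∧ |φ + ψ| ≤ 2.222 * δ ∧
    |Real.tan φ + Real.tan ψ| ≤ 4.444 * δ :=
  angles_near_corners_general δ φ ψ hδ0 hφ hψ hcos
end

section
/- Suppose φ = π/4 - α and ψ = -π/4 + β with α, β ≥ 0, α + β ≤ 2.222·δ, and 0 ≤ δ ≤ 0.0045. Then max{|cot 2φ|, |cot 2ψ|, |cot 2φ + cot 2ψ|} ≤ 4.49·δ. -/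
/-!
Doubling the angles puts them at distance 2α and 2β from ±π/2, so cot 2φ = tan 2α ≥ 0 and
cot 2ψ = -tan 2β ≤ 0. Since tan t ≤ t / (1 - t²/2) and 2α, 2β ≤ 4.444 δ, both lie within 4.49 δ
of 0, and having opposite signs, so does their sum.
-/

open Real

lemma Real.cot_pi_div_two_sub (x : ℝ) : cot (π / 2 - x) = tan x := by
  rw [← tan_inv_eq_cot, tan_pi_div_two_sub, inv_inv]

lemma Real.cot_neg (x : ℝ) : cot (-x) = -cot x := by
  rw [← tan_inv_eq_cot, ← tan_inv_eq_cot, tan_neg, inv_neg]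

lemma Real.tan_le_div_of_le {x c : ℝ} (hx : 0 ≤ x) (hxc : x ≤ c) (hc : c ^ 2 < 2) :
    tan x ≤ c / (1 - c ^ 2 / 2) := by
  have hcos : 1 - c ^ 2 / 2 ≤ cos x := by
    have := one_sub_sq_div_two_le_cos (x := x)
    nlinarith
  rw [tan_eq_sin_div_cos]
  exact div_le_div₀ (hx.trans hxc) ((sin_le hx).trans hxc) (by linarith) hcos

lemma abs_add_le_max_abs_of_nonneg_of_nonpos {x y : ℝ} (hx : 0 ≤ x) (hy : y ≤ 0) :
    |x + y| ≤ max |x| |y| := by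
  rw [abs_of_nonneg hx, abs_of_nonpos hy, abs_le]
  constructor <;> cases max_cases x (-y) <;> linarith

lemma tan_two_mul_mem_Icc {a δ : ℝ} (ha : 0 ≤ a) (haδ : a ≤ 2.222 * δ) (hδ : δ ≤ 0.0045) :
    tan (2 * a) ∈ Set.Icc 0 (4.49 * δ) := by
  have hδ0 : 0 ≤ δ := by linarith
  refine ⟨tan_nonneg_of_nonneg_of_le_pi_div_two (by linarith) (by linarith [pi_gt_three]), ?_⟩
  have hc : (4.444 * δ) ^ 2 < 2 := by nlinarith
  calc tan (2 * a) ≤ 4.444 * δ / (1 - (4.444 * δ) ^ 2 / 2) :=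
        tan_le_div_of_le (by linarith) (by linarith) hc
    _ ≤ 4.49 * δ := by
        rw [div_le_iff₀ (by linarith)]
        nlinarith [mul_nonneg hδ0 (mul_nonneg hδ0 hδ0)]

theorem cot_bounds_near_corners_general (δ α β φ ψ : ℝ)
    (hδ : δ ≤ 0.0045)
    (hα : 0 ≤ α) (hβ : 0 ≤ β) (hab : α + β ≤ 2.222 * δ)
    (hφ : φ = π/4 - α) (hψ : ψ = -(π/4) + β) :
    max (max |Real.cot (2 * φ)| |Real.cot (2 * ψ)|)
        |Real.cot (2 * φ) + Real.cot (2 * ψ)| ≤ 4.49 * δ := by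
  have hcotφ : cot (2 * φ) = tan (2 * α) := by
    rw [hφ, show 2 * (π / 4 - α) = π / 2 - 2 * α by ring, cot_pi_div_two_sub]
  have hcotψ : cot (2 * ψ) = -tan (2 * β) := by
    rw [hψ, show 2 * (-(π / 4) + β) = -(π / 2 - 2 * β) by ring, cot_neg, cot_pi_div_two_sub]
  obtain ⟨hα0, hαδ⟩ := tan_two_mul_mem_Icc hα (by linarith) hδ
  obtain ⟨hβ0, hβδ⟩ := tan_two_mul_mem_Icc hβ (by linarith) hδ
  have hmax : max |tan (2 * α)| |-tan (2 * β)| ≤ 4.49 * δ := by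
    rw [abs_neg, abs_of_nonneg hα0, abs_of_nonneg hβ0]
    exact max_le hαδ hβδ
  rw [hcotφ, hcotψ]
  exact max_le hmax
    ((abs_add_le_max_abs_of_nonneg_of_nonpos hα0 (neg_nonpos.2 hβ0)).trans hmax)

theorem cot_bounds_near_corners (δ α β φ ψ : ℝ)
    (hδ0 : 0 ≤ δ) (hδ : δ ≤ 0.0045)
    (hα : 0 ≤ α) (hβ : 0 ≤ β) (hab : α + β ≤ 2.222 * δ)
    (hφ : φ = π/4 - α) (hψ : ψ = -(π/4) + β) :
    max (max |Real.cot (2 * φ)| |Real.cot (2 * ψ)|)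
        |Real.cot (2 * φ) + Real.cot (2 * ψ)| ≤ 4.49 * δ :=
  cot_bounds_near_corners_general δ α β φ ψ hδ hα hβ hab hφ hψ
end
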